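/- arXiv:math/0603390 — 2 statements merged into one kernel-verified Lean document; each statement's English description precedes it below -/
import Mathlib

section
/- Suppose that under P^{⊗2} the number of intersections N_∞ = Σ_{t≥1} 1{ω_t = ω̃_t} of two independent copies of the walk is almost surely finite, and that there exist a_n > 0, b_n ∈ ℝ^d and a probability measure ν on ℝ^d such that (ω_n − b_n)/a_n converges in distribution to ν. Then under P^{⊗2} the triple (N_n, (ω_n − b_n)/a_n, (ω̃_n − b_n)/a_n) converges in distribution, as n → ∞, to a triple (N, S, S̃) of independent random variables, where N has the law of N_∞ and S, S̃ each have law ν. -/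
open MeasureTheory ProbabilityTheory Filter Finset
open scoped ENNReal NNReal Topology

namespace StablePolymer

variable {d : ℕ} {ΩW Ωe : Type*} [MeasurableSpace ΩW] [MeasurableSpace Ωe]

/-- `ω` is a random walk on `ℤ^d` started at the origin, with i.i.d. increments of law `q`. -/
structure IsRandomWalk (P : Measure ΩW) (ω : ℕ → ΩW → (Fin d → ℤ))
    (q : (Fin d → ℤ) → ℝ) : Prop where
  meas : ∀ n, Measurable (ω n)
  zero : ∀ x, ω 0 x = 0
  indep : iIndepFun (fun n x => ω (n + 1) x - ω n x) P
  law : ∀ n a, P {x | ω (n + 1) x - ω n x = a} = ENNReal.ofReal (q a)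

/-- `η` is an i.i.d. environment, non-constant, with finite exponential moments. -/
structure IsEnvironment (Q : Measure Ωe) (η : ℕ → (Fin d → ℤ) → Ωe → ℝ) : Prop where
  meas : ∀ n a, Measurable (η n a)
  indep : iIndepFun (fun p : ℕ × (Fin d → ℤ) => η p.1 p.2) Q
  ident : ∀ n a, Q.map (η n a) = Q.map (η 1 0)
  nonconst : ¬ ∃ c : ℝ, ∀ᵐ y ∂Q, η 1 0 y = c
  expMoment : ∀ b : ℝ, Integrable (fun y => Real.exp (b * η 1 0 y)) Q

/-- The logarithmic moment generating function `λ(β)` of the environment. -/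
noncomputable def lam (Q : Measure Ωe) (η : ℕ → (Fin d → ℤ) → Ωe → ℝ) (b : ℝ) : ℝ :=
  Real.log (∫ y, Real.exp (b * η 1 0 y) ∂Q)

/-- The partition function `Z_n`. -/
noncomputable def Zn (P : Measure ΩW) (ω : ℕ → ΩW → (Fin d → ℤ))
    (η : ℕ → (Fin d → ℤ) → Ωe → ℝ) (b : ℝ) (n : ℕ) (y : Ωe) : ℝ :=
  ∫ x, Real.exp (b * ∑ j ∈ Finset.Icc 1 n, η j (ω j x) y) ∂P



/-- The number of meetings of the two independent walks `ω, ω̃` up to time `n`. -/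
noncomputable def Nn (ω : ℕ → ΩW → (Fin d → ℤ)) (n : ℕ) (z : ΩW × ΩW) : ℕ :=
  ((Finset.Icc 1 n).filter fun t => ω t z.1 = ω t z.2).card

/-- The total number of meetings of the two walks (junk value `0` if infinite). -/
noncomputable def NinfReal (ω : ℕ → ΩW → (Fin d → ℤ)) (z : ΩW × ΩW) : ℝ :=
  ({t : ℕ | 1 ≤ t ∧ ω t z.1 = ω t z.2}.ncard : ℝ)

/-- The rescaled walk `(ω_n - b_n)/a_n` as an `ℝ^d`-valued random variable. -/
noncomputable def rescaled (ω : ℕ → ΩW → (Fin d → ℤ)) (an : ℕ → ℝ) (bn : ℕ → Fin d → ℝ)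
    (n : ℕ) (x : ΩW) : Fin d → ℝ :=
  fun i => ((ω n x i : ℝ) - bn n i) / an n

/-!
Fix a time `K`. Outside the event that the two walks meet after time `K`, whose probability
tends to `0` as `K → ∞` because `N_∞ < ∞` a.s., the count `N_n` equals `N_K` for all `n ≥ K`.
Replacing `ω_n` by `ω_n - ω_K` changes the rescaled walk by `ω_K / a_n`, which tends to `0` in
probability because `a_n → ∞`: if `a_n` stayed bounded along a subsequence, the weak limit
`ν ⊗ ν` of the two rescaled walks would force `ω_n = ω̃_n` with probability bounded below,
whereas `P^{⊗2}(ω_n = ω̃_n) → 0`. Since `ω_n - ω_K` is independent of the path up to time `K`,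
the modified triple has law `law(N_K) ⊗ μ_n ⊗ μ_n` with `μ_n → ν`. Letting first `n → ∞` and
then `K → ∞`, with all errors measured in the Lévy–Prokhorov metric, gives the claim.
-/

section LevyProkhorov

variable {Ω : Type*} [MeasurableSpace Ω] [PseudoMetricSpace Ω] [OpensMeasurableSpace Ω]

lemma measure_map_le_map_thickening_add {α : Type*} [MeasurableSpace α] (μ : Measure α)
    {X Y : α → Ω} (hX : AEMeasurable X μ) (hY : AEMeasurable Y μ) {ε : ℝ} {δ : ℝ≥0∞}
    (hεδ : ε < δ.toReal) (hδ : μ {a | ε ≤ dist (X a) (Y a)} ≤ δ) {B : Set Ω}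
    (hB : MeasurableSet B) :
    μ.map X B ≤ μ.map Y (Metric.thickening δ.toReal B) + δ := by
  rw [Measure.map_apply_of_aemeasurable hX hB,
    Measure.map_apply_of_aemeasurable hY Metric.isOpen_thickening.measurableSet]
  have hcover : X ⁻¹' B ⊆ Y ⁻¹' Metric.thickening δ.toReal B ∪ {a | ε ≤ dist (X a) (Y a)} := by
    intro a ha
    by_cases hd : ε ≤ dist (X a) (Y a)
    · exact Or.inr hd
    · exact Or.inl (Metric.mem_thickening_iff.2
        ⟨X a, ha, by rw [dist_comm]; exact (not_le.1 hd).trans hεδ⟩)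
  exact (measure_mono hcover).trans ((measure_union_le _ _).trans (add_le_add le_rfl hδ))

lemma levyProkhorovEDist_map_le {α : Type*} [MeasurableSpace α] (μ : Measure α)
    {X Y : α → Ω} (hX : AEMeasurable X μ) (hY : AEMeasurable Y μ) {ε : ℝ} (hε : 0 ≤ ε) :
    levyProkhorovEDist (μ.map X) (μ.map Y) ≤
      ENNReal.ofReal ε + μ {a | ε ≤ dist (X a) (Y a)} := by
  refine levyProkhorovEDist_le_of_forall _ _ _ fun δ B hδ hδtop hB => ?_
  have hεδ : ε < δ.toReal :=
    (ENNReal.ofReal_lt_iff_lt_toReal hε hδtop.ne).1 ((le_self_add).trans_lt hδ)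
  have hmeas : μ {a | ε ≤ dist (X a) (Y a)} ≤ δ := le_add_self.trans hδ.le
  refine ⟨measure_map_le_map_thickening_add μ hX hY hεδ hmeas hB,
    measure_map_le_map_thickening_add μ hY hX hεδ ?_ hB⟩
  simpa only [dist_comm] using hmeas

lemma tendsto_levyProkhorovEDist_of_approx {ι κ : Type*} {l : Filter ι} {k : Filter κ} [k.NeBot]
    {μ : ι → Measure Ω} {ν : κ → ι → Measure Ω} {ρ : κ → Measure Ω} {ρ' : Measure Ω}
    (hν : ∀ K, Tendsto (fun n => levyProkhorovEDist (ν K n) (ρ K)) l (𝓝 0))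
    (hρ : Tendsto (fun K => levyProkhorovEDist (ρ K) ρ') k (𝓝 0))
    (hμν : ∀ ε > 0, ∀ᶠ K in k, ∀ᶠ n in l, levyProkhorovEDist (μ n) (ν K n) ≤ ε) :
    Tendsto (fun n => levyProkhorovEDist (μ n) ρ') l (𝓝 0) := by
  refine ENNReal.tendsto_nhds_zero.2 fun ε hε => ?_
  have hε3 : 0 < ε / 3 := ENNReal.div_pos hε.ne' ENNReal.ofNat_ne_top
  obtain ⟨K, hρK, hμνK⟩ :=
    ((ENNReal.tendsto_nhds_zero.1 hρ _ hε3).and (hμν _ hε3)).exists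
  filter_upwards [hμνK, ENNReal.tendsto_nhds_zero.1 (hν K) _ hε3] with n h₁ h₂
  calc levyProkhorovEDist (μ n) ρ'
      ≤ levyProkhorovEDist (μ n) (ν K n) + levyProkhorovEDist (ν K n) (ρ K)
          + levyProkhorovEDist (ρ K) ρ' :=
        (levyProkhorovEDist_triangle _ (ρ K) _).trans
          (by gcongr; exact levyProkhorovEDist_triangle _ _ _)
    _ ≤ ε / 3 + ε / 3 + ε / 3 := by gcongr
    _ = ε := ENNReal.add_thirds ε

/-- Billingsley, *Convergence of Probability Measures*, Theorem 3.2. -/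
lemma tendsto_levyProkhorovEDist_map_of_approx {α ι κ : Type*} [MeasurableSpace α]
    {μ : Measure α} {l : Filter ι} {k : Filter κ} [k.NeBot] {X : ι → α → Ω}
    {Y : κ → ι → α → Ω} {ρ : κ → Measure Ω} {ρ' : Measure Ω}
    (hX : ∀ n, AEMeasurable (X n) μ) (hY : ∀ K n, AEMeasurable (Y K n) μ)
    (hYρ : ∀ K, Tendsto (fun n => levyProkhorovEDist (μ.map (Y K n)) (ρ K)) l (𝓝 0))
    (hρ : Tendsto (fun K => levyProkhorovEDist (ρ K) ρ') k (𝓝 0))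
    (hXY : ∀ δ > 0, ∀ ε > 0, ∀ᶠ K in k, ∀ᶠ n in l, μ {a | δ ≤ dist (X n a) (Y K n a)} ≤ ε) :
    Tendsto (fun n => levyProkhorovEDist (μ.map (X n)) ρ') l (𝓝 0) := by
  refine tendsto_levyProkhorovEDist_of_approx hYρ hρ fun ε hε => ?_
  obtain ⟨δ, -, hδ, hδε⟩ := ENNReal.lt_iff_exists_real_btwn.1 (ENNReal.half_pos hε.ne')
  filter_upwards [hXY δ (ENNReal.ofReal_pos.1 hδ) (ε / 2) (ENNReal.half_pos hε.ne')] with K hK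
  filter_upwards [hK] with n hn
  calc levyProkhorovEDist (μ.map (X n)) (μ.map (Y K n))
      ≤ ENNReal.ofReal δ + μ {a | δ ≤ dist (X n a) (Y K n a)} :=
        levyProkhorovEDist_map_le μ (hX n) (hY K n) (ENNReal.ofReal_pos.1 hδ).le
    _ ≤ ε / 2 + ε / 2 := add_le_add hδε.le hn
    _ = ε := ENNReal.add_halves ε

lemma tendsto_levyProkhorovEDist_map_of_tendstoInMeasure_sub {E α ι : Type*}
    [SeminormedAddCommGroup E] [MeasurableSpace E] [OpensMeasurableSpace E] [MeasurableSpace α]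
    {μ : Measure α} {l : Filter ι} {X Y : ι → α → E} {ρ : Measure E}
    (hX : ∀ n, AEMeasurable (X n) μ) (hY : ∀ n, AEMeasurable (Y n) μ)
    (hYρ : Tendsto (fun n => levyProkhorovEDist (μ.map (Y n)) ρ) l (𝓝 0))
    (hXY : TendstoInMeasure μ (X - Y) l 0) :
    Tendsto (fun n => levyProkhorovEDist (μ.map (X n)) ρ) l (𝓝 0) := by
  refine tendsto_levyProkhorovEDist_map_of_approx (k := (⊤ : Filter Unit)) hX (fun _ => hY)
    (fun _ => hYρ) (by simp only [levyProkhorovEDist_self, tendsto_const_nhds]) fun δ hδ ε hε => ?_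
  simp only [eventually_top]
  intro
  filter_upwards [ENNReal.tendsto_nhds_zero.1 (tendstoInMeasure_iff_norm.1 hXY δ hδ) ε hε]
    with n hn
  simpa only [dist_eq_norm, Pi.sub_apply, Pi.zero_apply, sub_zero] using hn

variable [TopologicalSpace.SeparableSpace Ω]

lemma _root_.MeasureTheory.ProbabilityMeasure.tendsto_iff_tendsto_levyProkhorovEDist
    {ι : Type*} {l : Filter ι} {μs : ι → ProbabilityMeasure Ω} {μ : ProbabilityMeasure Ω} :
    Tendsto μs l (𝓝 μ) ↔
      Tendsto (fun i => levyProkhorovEDist (μs i : Measure Ω) μ) l (𝓝 0) := by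
  rw [(LevyProkhorov.probabilityMeasureHomeomorph (Ω := Ω)).isInducing.tendsto_nhds_iff,
    tendsto_iff_edist_tendsto_0]
  rfl

lemma tendsto_levyProkhorovEDist_iff_forall_integral {ι : Type*} {l : Filter ι}
    {μs : ι → Measure Ω} [∀ i, IsProbabilityMeasure (μs i)] {μ : Measure Ω}
    [IsProbabilityMeasure μ] :
    Tendsto (fun i => levyProkhorovEDist (μs i) μ) l (𝓝 0) ↔
      ∀ f : BoundedContinuousFunction Ω ℝ,
        Tendsto (fun i => ∫ x, f x ∂μs i) l (𝓝 (∫ x, f x ∂μ)) :=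
  (ProbabilityMeasure.tendsto_iff_tendsto_levyProkhorovEDist
    (μs := fun i => ⟨μs i, inferInstance⟩) (μ := ⟨μ, inferInstance⟩)).symm.trans
    ProbabilityMeasure.tendsto_iff_forall_integral_tendsto

end LevyProkhorov

section Product

variable {α β : Type*} [MeasurableSpace α] [PseudoMetricSpace α] [OpensMeasurableSpace α]
  [SecondCountableTopology α] [MeasurableSpace β] [PseudoMetricSpace β]
  [OpensMeasurableSpace β] [SecondCountableTopology β]

lemma tendsto_levyProkhorovEDist_prod {ι : Type*} {l : Filter ι} {μs : ι → Measure α}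
    {νs : ι → Measure β} [∀ i, IsProbabilityMeasure (μs i)] [∀ i, IsProbabilityMeasure (νs i)]
    {μ : Measure α} {ν : Measure β} [IsProbabilityMeasure μ] [IsProbabilityMeasure ν]
    (hμ : Tendsto (fun i => levyProkhorovEDist (μs i) μ) l (𝓝 0))
    (hν : Tendsto (fun i => levyProkhorovEDist (νs i) ν) l (𝓝 0)) :
    Tendsto (fun i => levyProkhorovEDist ((μs i).prod (νs i)) (μ.prod ν)) l (𝓝 0) := by
  have hμ' := (ProbabilityMeasure.tendsto_iff_tendsto_levyProkhorovEDist
    (μs := fun i => ⟨μs i, inferInstance⟩) (μ := ⟨μ, inferInstance⟩)).2 hμ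
  have hν' := (ProbabilityMeasure.tendsto_iff_tendsto_levyProkhorovEDist
    (μs := fun i => ⟨νs i, inferInstance⟩) (μ := ⟨ν, inferInstance⟩)).2 hν
  exact (ProbabilityMeasure.tendsto_iff_tendsto_levyProkhorovEDist
    (μs := fun i => ProbabilityMeasure.prod ⟨μs i, inferInstance⟩ ⟨νs i, inferInstance⟩)
    (μ := ProbabilityMeasure.prod ⟨μ, inferInstance⟩ ⟨ν, inferInstance⟩)).1
    ((ProbabilityMeasure.continuous_prod.tendsto _).comp (hμ'.prodMk_nhds hν'))

end Product

section Independence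

variable {Ω Ω' β β' γ γ' : Type*} [MeasurableSpace Ω] [MeasurableSpace Ω']
  [MeasurableSpace β] [MeasurableSpace β'] [MeasurableSpace γ] [MeasurableSpace γ']
  {μ : Measure Ω} {μ' : Measure Ω'} [IsProbabilityMeasure μ] [IsProbabilityMeasure μ']
  {f : Ω → β} {g : Ω → γ} {f' : Ω' → β'} {g' : Ω' → γ'}

lemma _root_.ProbabilityTheory.IndepFun.prodMap (hf : Measurable f) (hg : Measurable g)
    (hf' : Measurable f') (hg' : Measurable g') (h : IndepFun f g μ) (h' : IndepFun f' g' μ') :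
    IndepFun (Prod.map f f') (Prod.map g g') (μ.prod μ') := by
  rw [indepFun_iff_map_prod_eq_prod_map_map (hf.prodMap hf').aemeasurable
    (hg.prodMap hg').aemeasurable, ← Measure.map_prod_map _ _ hf hf',
    ← Measure.map_prod_map _ _ hg hg']
  refine (Measure.prod_eq_generateFrom generateFrom_prod generateFrom_prod isPiSystem_prod
    isPiSystem_prod ((μ.map f).toFiniteSpanningSetsIn.prod (μ'.map f').toFiniteSpanningSetsIn)
    ((μ.map g).toFiniteSpanningSetsIn.prod (μ'.map g').toFiniteSpanningSetsIn) ?_).symm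
  rintro _ ⟨s, hs, s', hs', rfl⟩ _ ⟨t, ht, t', ht', rfl⟩
  have hrect : (fun z => (Prod.map f f' z, Prod.map g g' z)) ⁻¹' ((s ×ˢ s') ×ˢ t ×ˢ t')
      = (f ⁻¹' s ∩ g ⁻¹' t) ×ˢ (f' ⁻¹' s' ∩ g' ⁻¹' t') := by
    ext z; simp only [Set.mem_preimage, Set.mem_prod, Set.mem_inter_iff, Prod.map_fst,
      Prod.map_snd]; tauto
  rw [Measure.map_apply ((hf.prodMap hf').prodMk (hg.prodMap hg'))
      ((hs.prod hs').prod (ht.prod ht')), hrect, Measure.prod_prod, Measure.prod_prod,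
    Measure.prod_prod, h.measure_inter_preimage_eq_mul _ _ hs ht,
    h'.measure_inter_preimage_eq_mul _ _ hs' ht', Measure.map_apply hf hs,
    Measure.map_apply hf' hs', Measure.map_apply hg ht, Measure.map_apply hg' ht']
  ring

end Independence

section Meetings

variable {Ω : Type*} {ω : ℕ → Ω → (Fin d → ℤ)}

def meetAfter (ω : ℕ → Ω → (Fin d → ℤ)) (K : ℕ) : Set (Ω × Ω) :=
  {z | ∃ t, K < t ∧ ω t z.1 = ω t z.2}

def restart (ω : ℕ → Ω → (Fin d → ℤ)) (K : ℕ) : ℕ → Ω → (Fin d → ℤ) :=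
  fun t x => ω t x - ω K x

def triple {E : Type*} (N : Ω × Ω → ℝ) (S : Ω → E) (z : Ω × Ω) : ℝ × E × E :=
  (N z, S z.1, S z.2)

lemma Nn_eq_Nn_stopped (K : ℕ) (z : Ω × Ω) :
    Nn ω K z = Nn (fun t (h : ℕ → Fin d → ℤ) => h t) K
      (fun t => ω (min t K) z.1, fun t => ω (min t K) z.2) := by
  refine congrArg Finset.card (Finset.filter_congr fun t ht => ?_)
  simp only [min_eq_left (Finset.mem_Icc.1 ht).2]

lemma Nn_eq_of_notMem_meetAfter {K n : ℕ} {z : Ω × Ω} (hz : z ∉ meetAfter ω K)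
    (hKn : K ≤ n) : Nn ω n z = Nn ω K z := by
  refine congrArg Finset.card (Finset.ext fun t => ?_)
  simp only [Finset.mem_filter, Finset.mem_Icc]
  exact ⟨fun ⟨⟨h1, _⟩, h⟩ => ⟨⟨h1, not_lt.1 fun hKt => hz ⟨t, hKt, h⟩⟩, h⟩,
    fun ⟨⟨h1, h2⟩, h⟩ => ⟨⟨h1, h2.trans hKn⟩, h⟩⟩

lemma NinfReal_eq_of_notMem_meetAfter {K : ℕ} {z : Ω × Ω} (hz : z ∉ meetAfter ω K) :
    NinfReal ω z = Nn ω K z := by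
  have : {t : ℕ | 1 ≤ t ∧ ω t z.1 = ω t z.2} =
      ↑((Finset.Icc 1 K).filter fun t => ω t z.1 = ω t z.2) := by
    ext t
    simp only [Set.mem_ofPred_eq, Finset.coe_filter, Finset.mem_Icc]
    exact ⟨fun ⟨h1, h⟩ => ⟨⟨h1, not_lt.1 fun hKt => hz ⟨t, hKt, h⟩⟩, h⟩,
      fun ⟨⟨h1, _⟩, h⟩ => ⟨h1, h⟩⟩
  rw [NinfReal, this, Set.ncard_coe_finset, Nn]

lemma eventually_notMem_meetAfter {z : Ω × Ω}
    (hz : {t : ℕ | 1 ≤ t ∧ ω t z.1 = ω t z.2}.Finite) : ∀ᶠ K in atTop, z ∉ meetAfter ω K := by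
  obtain ⟨m, hm⟩ := hz.bddAbove
  filter_upwards [eventually_ge_atTop m] with K hK ⟨t, hKt, h⟩
  exact absurd (hm ⟨by omega, h⟩) (by omega)

variable [MeasurableSpace Ω] {μ : Measure (Ω × Ω)}

lemma measurable_restart (hω : ∀ t, Measurable (ω t)) (K n : ℕ) :
    Measurable (restart ω K n) :=
  (hω n).sub (hω K)

lemma measurable_Nn (hω : ∀ t, Measurable (ω t)) (n : ℕ) :
    Measurable fun z : Ω × Ω => (Nn ω n z : ℝ) := by
  simp only [Nn, Finset.card_filter, Nat.cast_sum, Nat.cast_ite, Nat.cast_one, Nat.cast_zero]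
  exact Finset.measurable_sum _ fun t _ => Measurable.ite
    (measurableSet_eq_fun ((hω t).comp measurable_fst) ((hω t).comp measurable_snd))
    measurable_const measurable_const

lemma measurable_rescaled {an : ℕ → ℝ} {bn : ℕ → Fin d → ℝ} {n : ℕ} (hω : Measurable (ω n)) :
    Measurable (rescaled ω an bn n) :=
  (measurable_of_countable fun v : Fin d → ℤ => fun i => ((v i : ℝ) - bn n i) / an n).comp hω

lemma measurable_triple {E : Type*} [MeasurableSpace E] {N : Ω × Ω → ℝ} {S : Ω → E}
    (hN : Measurable N) (hS : Measurable S) : Measurable (triple N S) :=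
  hN.prodMk ((hS.comp measurable_fst).prodMk (hS.comp measurable_snd))

lemma measurableSet_meetAfter (hω : ∀ t, Measurable (ω t)) (K : ℕ) :
    MeasurableSet (meetAfter ω K) := by
  have : meetAfter ω K = ⋃ t, ⋃ (_ : K < t), {z : Ω × Ω | ω t z.1 = ω t z.2} := by
    ext z; simp [meetAfter]
  rw [this]
  exact .iUnion fun t => .iUnion fun _ =>
    measurableSet_eq_fun ((hω t).comp measurable_fst) ((hω t).comp measurable_snd)

lemma ae_tendsto_Nn (hfin : ∀ᵐ z ∂μ, {t : ℕ | 1 ≤ t ∧ ω t z.1 = ω t z.2}.Finite) :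
    ∀ᵐ z ∂μ, Tendsto (fun n => (Nn ω n z : ℝ)) atTop (𝓝 (NinfReal ω z)) := by
  filter_upwards [hfin] with z hz
  refine tendsto_const_nhds.congr' ?_
  filter_upwards [eventually_notMem_meetAfter hz] with K hK
  rw [NinfReal_eq_of_notMem_meetAfter hK]

lemma aemeasurable_NinfReal (hω : ∀ t, Measurable (ω t))
    (hfin : ∀ᵐ z ∂μ, {t : ℕ | 1 ≤ t ∧ ω t z.1 = ω t z.2}.Finite) :
    AEMeasurable (NinfReal ω) μ :=
  aemeasurable_of_tendsto_metrizable_ae' (fun K => (measurable_Nn hω K).aemeasurable)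
    (ae_tendsto_Nn hfin)

lemma tendsto_levyProkhorovEDist_map_Nn [IsProbabilityMeasure μ] (hω : ∀ t, Measurable (ω t))
    (hfin : ∀ᵐ z ∂μ, {t : ℕ | 1 ≤ t ∧ ω t z.1 = ω t z.2}.Finite) :
    Tendsto (fun K => levyProkhorovEDist (μ.map fun z => (Nn ω K z : ℝ)) (μ.map (NinfReal ω)))
      atTop (𝓝 0) :=
  (ProbabilityMeasure.tendsto_iff_tendsto_levyProkhorovEDist (μs := fun K =>
    ⟨μ.map fun z => (Nn ω K z : ℝ), Measure.isProbabilityMeasure_map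
      (measurable_Nn hω K).aemeasurable⟩) (μ := ⟨μ.map (NinfReal ω),
    Measure.isProbabilityMeasure_map (aemeasurable_NinfReal hω hfin)⟩)).1
    (tendstoInDistribution_of_ae_tendsto (fun K => (measurable_Nn hω K).aemeasurable)
      (aemeasurable_NinfReal hω hfin) (ae_tendsto_Nn hfin)).tendsto

variable [IsFiniteMeasure μ]

lemma tendsto_measure_meetAfter (hω : ∀ t, Measurable (ω t))
    (hfin : ∀ᵐ z ∂μ, {t : ℕ | 1 ≤ t ∧ ω t z.1 = ω t z.2}.Finite) :
    Tendsto (fun K => μ (meetAfter ω K)) atTop (𝓝 0) := by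
  have hanti : Antitone (meetAfter ω) := fun K K' hKK' z ⟨t, ht, h⟩ => ⟨t, by omega, h⟩
  have hnull : μ (⋂ K, meetAfter ω K) = 0 := by
    refine measure_mono_null (fun z hz => ?_) (ae_iff.1 hfin)
    exact fun hfin_z => (eventually_notMem_meetAfter hfin_z).exists.elim
      fun K hK => hK (Set.mem_iInter.1 hz K)
  rw [← hnull]
  exact tendsto_measure_iInter_atTop
    (fun K => (measurableSet_meetAfter hω K).nullMeasurableSet) hanti ⟨0, measure_ne_top _ _⟩

lemma tendsto_measure_meet (hω : ∀ t, Measurable (ω t))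
    (hfin : ∀ᵐ z ∂μ, {t : ℕ | 1 ≤ t ∧ ω t z.1 = ω t z.2}.Finite) :
    Tendsto (fun n => μ {z | ω n z.1 = ω n z.2}) atTop (𝓝 0) := by
  refine tendsto_of_tendsto_of_tendsto_of_le_of_le' tendsto_const_nhds
    ((tendsto_measure_meetAfter hω hfin).comp (tendsto_sub_atTop_nat 1))
    (.of_forall fun _ => zero_le) ?_
  filter_upwards [eventually_ge_atTop 1] with n hn
  exact measure_mono fun z hz => ⟨n, Nat.sub_one_lt_of_lt hn, hz⟩

end Meetings

section RandomWalk

variable {Ω : Type*} [MeasurableSpace Ω] {P : Measure Ω} {ω : ℕ → Ω → (Fin d → ℤ)}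
  {q : (Fin d → ℤ) → ℝ}

lemma IsRandomWalk.sum_range_increment (hw : IsRandomWalk P ω q) (n : ℕ) (x : Ω) :
    ∑ t ∈ Finset.range n, (ω (t + 1) x - ω t x) = ω n x := by
  rw [Finset.sum_range_sub (fun t => ω t x), hw.zero, sub_zero]

lemma IsRandomWalk.indepFun_stopped_restart (hw : IsRandomWalk P ω q) {K n : ℕ} (hKn : K ≤ n) :
    IndepFun (fun x t => ω (min t K) x) (restart ω K n) P := by
  have hblocks := hw.indep.indepFun_finset (Finset.range K) (Finset.Ico K n)
    (Finset.disjoint_left.2 fun t ht ht' => by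
      rw [Finset.mem_range] at ht; rw [Finset.mem_Ico] at ht'; omega)
    fun t => (hw.meas (t + 1)).sub (hw.meas t)
  have hstop : (fun x t => ω (min t K) x) =
      (fun g t => ∑ s : Finset.range K, if (s : ℕ) < t then g s else 0) ∘
        fun x (s : Finset.range K) => ω (s + 1) x - ω s x := by
    funext x t
    rw [Function.comp_apply, Finset.sum_coe_sort (Finset.range K)
      fun s => if s < t then ω (s + 1) x - ω s x else 0, ← Finset.sum_filter,
      ← hw.sum_range_increment]
    congr 1
    ext s
    simp only [Finset.mem_filter, Finset.mem_range]
    omega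
  have hrestart : restart ω K n = (fun g => ∑ s : Finset.Ico K n, g s) ∘
      fun x (s : Finset.Ico K n) => ω (s + 1) x - ω s x := by
    funext x
    rw [Function.comp_apply, Finset.sum_coe_sort (Finset.Ico K n) fun s => ω (s + 1) x - ω s x,
      Finset.sum_Ico_eq_sub _ hKn, hw.sum_range_increment, hw.sum_range_increment, restart]
  rw [hstop, hrestart]
  exact hblocks.comp (measurable_of_countable _) (measurable_of_countable _)

lemma IsRandomWalk.map_Nn_rescaled_restart (hw : IsRandomWalk P ω q) [IsProbabilityMeasure P]
    {K n : ℕ} (hKn : K ≤ n) (an : ℕ → ℝ) (bn : ℕ → Fin d → ℝ) :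
    (P.prod P).map (triple (fun z => (Nn ω K z : ℝ)) (rescaled (restart ω K) an bn n)) =
      ((P.prod P).map fun z => (Nn ω K z : ℝ)).prod
        ((P.map (rescaled (restart ω K) an bn n)).prod
          (P.map (rescaled (restart ω K) an bn n))) := by
  set S := rescaled (restart ω K) an bn n
  have hrestart := measurable_restart hw.meas K n
  have hS : Measurable S := measurable_rescaled hrestart
  have hstop : Measurable fun x t => ω (min t K) x := measurable_pi_lambda _ fun t => hw.meas _
  have hrescale : Measurable (rescaled (fun _ (v : Fin d → ℤ) => v) an bn n) :=
    measurable_rescaled measurable_id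
  have hind : IndepFun (fun z => (Nn ω K z : ℝ)) (Prod.map S S) (P.prod P) := by
    have h := hw.indepFun_stopped_restart hKn
    convert (h.prodMap hstop hrestart hstop hrestart h).comp
      (measurable_Nn (fun t => measurable_pi_apply t) K) (hrescale.prodMap hrescale)
    · exact congrArg _ (Nn_eq_Nn_stopped K _)
    · rfl
  rwa [indepFun_iff_map_prod_eq_prod_map_map (measurable_Nn hw.meas K).aemeasurable
    (hS.prodMap hS).aemeasurable, ← Measure.map_prod_map _ _ hS hS] at hind

end RandomWalk

section Rescaling

variable {Ω : Type*} {ω : ℕ → Ω → (Fin d → ℤ)} {an : ℕ → ℝ} {bn : ℕ → Fin d → ℝ}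

lemma eq_of_dist_rescaled_lt {n : ℕ} {M : ℝ} (hpos : 0 < an n) (hM : an n ≤ M) {x y : Ω}
    (h : dist (rescaled ω an bn n x) (rescaled ω an bn n y) < M⁻¹) : ω n x = ω n y := by
  funext i
  have hi := (dist_pi_lt_iff (inv_pos.2 (hpos.trans_le hM))).1 h i
  rw [Real.dist_eq, rescaled, rescaled, div_sub_div_same, sub_sub_sub_cancel_right, abs_div,
    abs_of_pos hpos, div_lt_iff₀ hpos] at hi
  have hlt : |(ω n x i : ℝ) - ω n y i| < 1 :=
    hi.trans_le (by rw [inv_mul_le_iff₀ (hpos.trans_le hM), mul_one]; exact hM)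
  exact sub_eq_zero.1 (Int.abs_lt_one_iff.1 (by exact_mod_cast hlt))

variable [MeasurableSpace Ω] {P : Measure Ω}

lemma tendstoInMeasure_rescaled_restart_sub [IsFiniteMeasure P] (hω : ∀ t, Measurable (ω t))
    (han : Tendsto an atTop atTop) (K : ℕ) :
    TendstoInMeasure P (fun n => rescaled (restart ω K) an bn n - rescaled ω an bn n) atTop 0 := by
  refine tendstoInMeasure_of_tendsto_ae (fun n => ((measurable_rescaled
    (measurable_restart hω K n)).sub (measurable_rescaled (hω n))).aestronglyMeasurable)
    (ae_of_all _ fun x => tendsto_pi_nhds.2 fun i => ?_)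
  have hdiff : ∀ n, (rescaled (restart ω K) an bn n - rescaled ω an bn n) x i =
      -(ω K x i : ℝ) / an n := fun n => by
    simp only [Pi.sub_apply, rescaled, restart, Int.cast_sub]
    ring
  simpa only [hdiff, Pi.zero_apply] using tendsto_const_nhds.div_atTop han

lemma tendsto_atTop_of_tendsto_rescaled [IsProbabilityMeasure P] (hω : ∀ n, Measurable (ω n))
    (hmeet : Tendsto (fun n => (P.prod P) {z | ω n z.1 = ω n z.2}) atTop (𝓝 0))
    (han : ∀ n, 0 < an n) {ν : Measure (Fin d → ℝ)} [IsProbabilityMeasure ν]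
    (hconv : Tendsto (fun n => levyProkhorovEDist (P.map (rescaled ω an bn n)) ν) atTop (𝓝 0)) :
    Tendsto an atTop atTop := by
  have hS n : Measurable (rescaled ω an bn n) := measurable_rescaled (hω n)
  have := fun n => Measure.isProbabilityMeasure_map (μ := P) (hS n).aemeasurable
  by_contra hcon
  obtain ⟨M, hM⟩ : ∃ M, ∃ᶠ n in atTop, an n ≤ M := by
    simp only [tendsto_atTop, not_forall, Filter.not_eventually, not_le] at hcon
    obtain ⟨M, hM⟩ := hcon
    exact ⟨M, hM.mono fun n hn => hn.le⟩
  set U := {p : (Fin d → ℝ) × (Fin d → ℝ) | dist p.1 p.2 < (max M 1)⁻¹}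
  have hU : IsOpen U := isOpen_lt (continuous_fst.dist continuous_snd) continuous_const
  have hUpos : 0 < (ν.prod ν) U := by
    obtain ⟨v, hv⟩ := Measure.nonempty_support (IsProbabilityMeasure.ne_zero ν)
    set B := Metric.ball v ((max M 1)⁻¹ / 2)
    have hB : 0 < ν B := (Measure.mem_support_iff_forall v).1 hv _
      (Metric.ball_mem_nhds v (by positivity))
    calc 0 < ν B * ν B := ENNReal.mul_pos hB.ne' hB.ne'
      _ = (ν.prod ν) (B ×ˢ B) := (Measure.prod_prod _ _).symm
      _ ≤ (ν.prod ν) U := measure_mono fun p ⟨h1, h2⟩ => by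
        have := dist_triangle_right p.1 p.2 v
        simp only [B, Metric.mem_ball] at h1 h2
        show dist p.1 p.2 < _
        linarith
  have hprod : Tendsto (fun n => levyProkhorovEDist
      ((P.map (rescaled ω an bn n)).prod (P.map (rescaled ω an bn n))) (ν.prod ν)) atTop (𝓝 0) :=
    tendsto_levyProkhorovEDist_prod hconv hconv
  have hlim := ProbabilityMeasure.le_liminf_measure_open_of_tendsto
    ((ProbabilityMeasure.tendsto_iff_tendsto_levyProkhorovEDist
      (μs := fun n => ProbabilityMeasure.prod ⟨P.map (rescaled ω an bn n), inferInstance⟩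
        ⟨P.map (rescaled ω an bn n), inferInstance⟩)
      (μ := ProbabilityMeasure.prod ⟨ν, inferInstance⟩ ⟨ν, inferInstance⟩)).2
      hprod) hU
  have hmeet_large : ∀ᶠ n in atTop,
      an n ≤ M → (ν.prod ν) U / 2 < (P.prod P) {z | ω n z.1 = ω n z.2} := by
    filter_upwards [eventually_lt_of_lt_liminf ((ENNReal.half_lt_self hUpos.ne'
      (measure_ne_top _ _)).trans_le hlim)] with n hn hnM
    refine hn.trans_le ?_
    change ((P.map (rescaled ω an bn n)).prod (P.map (rescaled ω an bn n))) U ≤ _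
    rw [Measure.map_prod_map _ _ (hS n) (hS n), Measure.map_apply ((hS n).prodMap (hS n))
      hU.measurableSet]
    exact measure_mono fun z hz => eq_of_dist_rescaled_lt (han n) (hnM.trans (le_max_left M 1)) hz
  obtain ⟨n, hnM, hlarge, hsmall⟩ := (hM.and_eventually (hmeet_large.and
    (hmeet.eventually (eventually_lt_nhds (ENNReal.half_pos hUpos.ne'))))).exists
  exact lt_asymm (hlarge hnM) hsmall

end Rescaling

section Approximation

variable {Ω : Type*} {ω : ℕ → Ω → (Fin d → ℤ)} {an : ℕ → ℝ} {bn : ℕ → Fin d → ℝ}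

lemma dist_triple_eq_of_notMem_meetAfter {K n : ℕ} {z : Ω × Ω} (hz : z ∉ meetAfter ω K)
    (hKn : K ≤ n) :
    dist (triple (fun z => (Nn ω n z : ℝ)) (rescaled ω an bn n) z)
        (triple (fun z => (Nn ω K z : ℝ)) (rescaled (restart ω K) an bn n) z) =
      max (dist (rescaled ω an bn n z.1) (rescaled (restart ω K) an bn n z.1))
        (dist (rescaled ω an bn n z.2) (rescaled (restart ω K) an bn n z.2)) := by
  rw [triple, triple, Prod.dist_eq, Prod.dist_eq, Nn_eq_of_notMem_meetAfter hz hKn, dist_self]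
  exact max_eq_right (le_max_of_le_left dist_nonneg)

variable [MeasurableSpace Ω] {P : Measure Ω} [IsProbabilityMeasure P]

lemma eventually_measure_dist_triple_le (hω : ∀ t, Measurable (ω t))
    (hfin : ∀ᵐ z ∂(P.prod P), {t : ℕ | 1 ≤ t ∧ ω t z.1 = ω t z.2}.Finite)
    (han : Tendsto an atTop atTop) {δ : ℝ} (hδ : 0 < δ) {ε : ℝ≥0∞} (hε : 0 < ε) :
    ∀ᶠ K in atTop, ∀ᶠ n in atTop, (P.prod P) {z | δ ≤ dist
      (triple (fun z => (Nn ω n z : ℝ)) (rescaled ω an bn n) z)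
      (triple (fun z => (Nn ω K z : ℝ)) (rescaled (restart ω K) an bn n) z)} ≤ ε := by
  have hε3 : 0 < ε / 3 := ENNReal.div_pos hε.ne' ENNReal.ofNat_ne_top
  filter_upwards [ENNReal.tendsto_nhds_zero.1 (tendsto_measure_meetAfter hω hfin) _ hε3]
    with K hK
  filter_upwards [eventually_ge_atTop K, ENNReal.tendsto_nhds_zero.1 (tendstoInMeasure_iff_dist.1
    (tendstoInMeasure_rescaled_restart_sub (P := P) (bn := bn) hω han K) δ hδ) _ hε3] with n hKn hn
  set A := {x | δ ≤ dist (rescaled ω an bn n x) (rescaled (restart ω K) an bn n x)}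
  have hA : P A ≤ ε / 3 := by
    simpa only [A, Pi.sub_apply, Pi.zero_apply, dist_zero_right, ← dist_eq_norm, dist_comm]
      using hn
  have hsub : {z | δ ≤ dist (triple (fun z => (Nn ω n z : ℝ)) (rescaled ω an bn n) z)
      (triple (fun z => (Nn ω K z : ℝ)) (rescaled (restart ω K) an bn n) z)}
        ⊆ meetAfter ω K ∪ A ×ˢ Set.univ ∪ Set.univ ×ˢ A := by
    intro z hz
    by_contra h
    simp only [Set.mem_union, Set.mem_prod, Set.mem_univ, and_true, true_and, not_or] at h
    rw [Set.mem_ofPred_eq, dist_triple_eq_of_notMem_meetAfter h.1.1 hKn] at hz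
    exact (le_max_iff.1 hz).elim h.1.2 h.2
  calc _ ≤ (P.prod P) (meetAfter ω K) + (P.prod P) (A ×ˢ Set.univ)
        + (P.prod P) (Set.univ ×ˢ A) :=
        (measure_mono hsub).trans ((measure_union_le _ _).trans
          (by gcongr; exact measure_union_le _ _))
    _ ≤ ε / 3 + ε / 3 + ε / 3 := by
        rw [Measure.prod_prod, Measure.prod_prod, measure_univ, mul_one, one_mul]
        gcongr
    _ = ε := ENNReal.add_thirds ε

lemma IsRandomWalk.tendsto_levyProkhorovEDist_map_restart {q : (Fin d → ℤ) → ℝ}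
    (hw : IsRandomWalk P ω q) (han : Tendsto an atTop atTop) {ν : Measure (Fin d → ℝ)}
    [IsProbabilityMeasure ν]
    (hconv : Tendsto (fun n => levyProkhorovEDist (P.map (rescaled ω an bn n)) ν) atTop (𝓝 0))
    (K : ℕ) :
    Tendsto (fun n => levyProkhorovEDist
      ((P.prod P).map (triple (fun z => (Nn ω K z : ℝ)) (rescaled (restart ω K) an bn n)))
      (((P.prod P).map fun z => (Nn ω K z : ℝ)).prod (ν.prod ν))) atTop (𝓝 0) := by
  have hS n : Measurable (rescaled ω an bn n) := measurable_rescaled (hw.meas n)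
  have hS' n : Measurable (rescaled (restart ω K) an bn n) :=
    measurable_rescaled (measurable_restart hw.meas K n)
  have := fun n => Measure.isProbabilityMeasure_map (μ := P) (hS' n).aemeasurable
  have hS'ν : Tendsto (fun n => levyProkhorovEDist (P.map (rescaled (restart ω K) an bn n)) ν)
      atTop (𝓝 0) :=
    tendsto_levyProkhorovEDist_map_of_tendstoInMeasure_sub (fun n => (hS' n).aemeasurable)
      (fun n => (hS n).aemeasurable) hconv (tendstoInMeasure_rescaled_restart_sub hw.meas han K)
  set lawN := (P.prod P).map fun z => (Nn ω K z : ℝ)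
  have := Measure.isProbabilityMeasure_map (μ := P.prod P) (measurable_Nn hw.meas K).aemeasurable
  have hN : Tendsto (fun _ : ℕ => levyProkhorovEDist lawN lawN) atTop (𝓝 0) := by
    simp only [levyProkhorovEDist_self, tendsto_const_nhds]
  have hprod : Tendsto (fun n => levyProkhorovEDist (lawN.prod
      ((P.map (rescaled (restart ω K) an bn n)).prod (P.map (rescaled (restart ω K) an bn n))))
      (lawN.prod (ν.prod ν))) atTop (𝓝 0) :=
    tendsto_levyProkhorovEDist_prod hN (tendsto_levyProkhorovEDist_prod hS'ν hS'ν)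
  refine (tendsto_congr' ?_).2 hprod
  filter_upwards [eventually_ge_atTop K] with n hKn
  rw [hw.map_Nn_rescaled_restart hKn]

end Approximation

/-- Assume the two independent walks meet only finitely often `P^{⊗2}`-a.s., and that
`(ω_n - b_n)/a_n` converges in distribution to `ν`. Then, under `P^{⊗2}`, the triple
`(N_n, (ω_n - b_n)/a_n, (ω̃_n - b_n)/a_n)` converges in distribution to an independent
triple `(N, S, S̃)` where `N` has the law of `N_∞` and `S, S̃` have law `ν`. -/
theorem triple_convergence (P : Measure ΩW) [IsProbabilityMeasure P]
    (ω : ℕ → ΩW → (Fin d → ℤ)) (q : (Fin d → ℤ) → ℝ)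
    (hw : IsRandomWalk P ω q)
    (hfin : ∀ᵐ z ∂(P.prod P), {t : ℕ | 1 ≤ t ∧ ω t z.1 = ω t z.2}.Finite)
    (an : ℕ → ℝ) (han : ∀ n, 0 < an n) (bn : ℕ → Fin d → ℝ)
    (ν : Measure (Fin d → ℝ)) [IsProbabilityMeasure ν]
    (hconv : ∀ f : BoundedContinuousFunction (Fin d → ℝ) ℝ,
      Tendsto (fun n : ℕ => ∫ x, f (rescaled ω an bn n x) ∂P) atTop (𝓝 (∫ v, f v ∂ν))) :
    ∀ f : BoundedContinuousFunction (ℝ × (Fin d → ℝ) × (Fin d → ℝ)) ℝ,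
      Tendsto (fun n : ℕ =>
          ∫ z, f ((Nn ω n z : ℝ), rescaled ω an bn n z.1, rescaled ω an bn n z.2)
            ∂(P.prod P))
        atTop
        (𝓝 (∫ w, f w ∂(((P.prod P).map (NinfReal ω)).prod (ν.prod ν)))) := by
  have hS n : Measurable (rescaled ω an bn n) := measurable_rescaled (hw.meas n)
  have hT n := measurable_triple (measurable_Nn hw.meas n) (hS n)
  have hT' K n := measurable_triple (measurable_Nn hw.meas K)
    (measurable_rescaled (an := an) (bn := bn) (measurable_restart hw.meas K n))
  have := fun n => Measure.isProbabilityMeasure_map (μ := P) (hS n).aemeasurable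
  have := fun n => Measure.isProbabilityMeasure_map (μ := P.prod P) (hT n).aemeasurable
  have := fun K => Measure.isProbabilityMeasure_map (μ := P.prod P)
    (measurable_Nn hw.meas K).aemeasurable
  have := Measure.isProbabilityMeasure_map (aemeasurable_NinfReal hw.meas hfin)
  have hlawS : Tendsto (fun n => levyProkhorovEDist (P.map (rescaled ω an bn n)) ν) atTop (𝓝 0) :=
    tendsto_levyProkhorovEDist_iff_forall_integral.2 fun f => by
      simpa only [integral_map (hS _).aemeasurable f.continuous.aestronglyMeasurable] using hconv f
  have han_top := tendsto_atTop_of_tendsto_rescaled hw.meas (tendsto_measure_meet hw.meas hfin)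
    han hlawS
  have hν : Tendsto (fun _ : ℕ => levyProkhorovEDist (ν.prod ν) (ν.prod ν)) atTop (𝓝 0) := by
    simp only [levyProkhorovEDist_self, tendsto_const_nhds]
  have hmain := tendsto_levyProkhorovEDist_map_of_approx (fun n => (hT n).aemeasurable)
    (fun K n => (hT' K n).aemeasurable) (hw.tendsto_levyProkhorovEDist_map_restart han_top hlawS)
    (tendsto_levyProkhorovEDist_prod (tendsto_levyProkhorovEDist_map_Nn hw.meas hfin) hν)
    fun δ hδ ε hε => eventually_measure_dist_triple_le hw.meas hfin han_top hδ hε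
  intro f
  simpa only [integral_map (hT _).aemeasurable f.continuous.aestronglyMeasurable, triple] using
    tendsto_levyProkhorovEDist_iff_forall_integral.1 hmain f

end StablePolymer
end

section
/- Let ξ be a real random variable which is non-constant, unbounded above (its essential supremum is +∞), and has finite exponential moments of all orders, and let λ(β) = ln E[exp(β ξ)]. Then β λ'(β) − λ(β) → +∞ as β → +∞. -/
open MeasureTheory Filter
open scoped Topology ENNReal

section LegendreAux

open Real

lemma exp_mul_le_of_between {s t u x : ℝ} (hst : s ≤ t) (htu : t ≤ u) :
    Real.exp (t * x) ≤ Real.exp (s * x) + Real.exp (u * x) := by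
  rcases le_or_gt 0 x with hx | hx
  · exact le_add_of_nonneg_of_le (Real.exp_pos _).le
      (Real.exp_le_exp.2 (mul_le_mul_of_nonneg_right htu hx))
  · exact le_add_of_le_of_nonneg
      (Real.exp_le_exp.2 (mul_le_mul_of_nonpos_right hst hx.le)) (Real.exp_pos _).le

lemma abs_le_exp_add_exp_neg (x : ℝ) : |x| ≤ Real.exp x + Real.exp (-x) := by
  rcases abs_cases x with ⟨h, _⟩ | ⟨h, _⟩ <;> rw [h]
  · linarith [Real.add_one_le_exp x, (Real.exp_pos (-x)).le]
  · linarith [Real.add_one_le_exp (-x), (Real.exp_pos x).le]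

variable {Ω : Type*} [MeasurableSpace Ω] (μ : Measure Ω) [IsProbabilityMeasure μ] (ξ : Ω → ℝ)

lemma integral_exp_mul_pos {t : ℝ} (h : Integrable (fun x => Real.exp (t * ξ x)) μ) :
    0 < ∫ x, Real.exp (t * ξ x) ∂μ := by
  simpa [ProbabilityTheory.mgf] using ProbabilityTheory.mgf_pos (μ := μ) (X := ξ) (t := t) h

lemma hasDerivAt_integral_exp_mul (hmeas : Measurable ξ)
    (hint : ∀ b : ℝ, Integrable (fun x => Real.exp (b * ξ x)) μ) (β : ℝ) :
    HasDerivAt (fun t : ℝ => ∫ x, Real.exp (t * ξ x) ∂μ)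
      (∫ x, ξ x * Real.exp (β * ξ x) ∂μ) β := by
  have key := hasDerivAt_integral_of_dominated_loc_of_deriv_le (μ := μ)
    (F := fun t ω => Real.exp (t * ξ ω)) (F' := fun t ω => ξ ω * Real.exp (t * ξ ω))
    (x₀ := β) (s := Metric.ball β 1)
    (bound := fun ω => 2 * (Real.exp ((β - 2) * ξ ω) + Real.exp ((β + 2) * ξ ω)))
    (Metric.ball_mem_nhds β one_pos)
    (Filter.Eventually.of_forall fun t => ((hmeas.const_mul t).exp).aestronglyMeasurable)
    (hint β)
    ((hmeas.mul (hmeas.const_mul β).exp).aestronglyMeasurable)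
    ?_ ?_ ?_
  · exact key.2
  · refine Filter.Eventually.of_forall fun ω => fun t ht => ?_
    have hball : |t - β| < 1 := by
      simpa [Metric.mem_ball, Real.dist_eq] using ht
    have h1 : |ξ ω| * Real.exp (t * ξ ω)
        ≤ Real.exp ((t + 1) * ξ ω) + Real.exp ((t - 1) * ξ ω) := by
      have habs := abs_le_exp_add_exp_neg (ξ ω)
      have hpos := (Real.exp_pos (t * ξ ω)).le
      calc |ξ ω| * Real.exp (t * ξ ω)
          ≤ (Real.exp (ξ ω) + Real.exp (-ξ ω)) * Real.exp (t * ξ ω) :=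
            mul_le_mul_of_nonneg_right habs hpos
        _ = Real.exp ((t + 1) * ξ ω) + Real.exp ((t - 1) * ξ ω) := by
            rw [add_mul, ← Real.exp_add, ← Real.exp_add]; ring_nf
    have h2 : Real.exp ((t + 1) * ξ ω)
        ≤ Real.exp ((β - 2) * ξ ω) + Real.exp ((β + 2) * ξ ω) :=
      exp_mul_le_of_between (by linarith [abs_lt.1 hball]) (by linarith [abs_lt.1 hball])
    have h3 : Real.exp ((t - 1) * ξ ω)
        ≤ Real.exp ((β - 2) * ξ ω) + Real.exp ((β + 2) * ξ ω) :=
      exp_mul_le_of_between (by linarith [abs_lt.1 hball]) (by linarith [abs_lt.1 hball])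
    rw [Real.norm_eq_abs, abs_mul, Real.abs_exp]
    linarith
  · exact (((hint (β - 2)).add (hint (β + 2))).const_mul 2)
  · refine Filter.Eventually.of_forall fun ω => fun t _ => ?_
    have := (((hasDerivAt_id t).mul_const (ξ ω)).exp)
    simpa [mul_comm] using this

lemma convexOn_logmgf (hint : ∀ b : ℝ, Integrable (fun x => Real.exp (b * ξ x)) μ) :
    ConvexOn ℝ Set.univ (fun t : ℝ => Real.log (∫ x, Real.exp (t * ξ x) ∂μ)) := by
  refine ⟨convex_univ, fun x _ y _ p q hp hq hpq => ?_⟩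
  simp only [smul_eq_mul]
  rcases eq_or_lt_of_le hp with hp0 | hp0
  · have hq1 : q = 1 := by linarith
    simp [← hp0, hq1]
  rcases eq_or_lt_of_le hq with hq0 | hq0
  · have hp1 : p = 1 := by linarith
    simp [← hq0, hp1]
  have hp1 : p < 1 := by linarith
  have hq1 : q < 1 := by linarith
  have hpq' : Real.HolderConjugate (1 / p) (1 / q) := by
    constructor
    · rw [one_div, one_div, inv_inv, inv_inv, inv_one]; exact hpq
    · positivity
    · positivity
  set f : Ω → ℝ := fun ω => Real.exp (p * (x * ξ ω)) with hf_def
  set g : Ω → ℝ := fun ω => Real.exp (q * (y * ξ ω)) with hg_def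
  have memf : ∀ {r s : ℝ}, 0 < r →
      MemLp (fun ω => Real.exp (r * (s * ξ ω))) (ENNReal.ofReal (1 / r)) μ := by
    intro r s hr
    have h2 := (memLp_one_iff_integrable.2 (hint s)).norm_rpow_div (ENNReal.ofReal r)
    have he : (fun ω => ‖Real.exp (s * ξ ω)‖ ^ (ENNReal.ofReal r).toReal)
        = fun ω => Real.exp (r * (s * ξ ω)) := by
      funext ω
      rw [ENNReal.toReal_ofReal hr.le, Real.norm_eq_abs, Real.abs_exp, ← Real.exp_mul, mul_comm]
    have hexp : (1 : ℝ≥0∞) / ENNReal.ofReal r = ENNReal.ofReal (1 / r) := by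
      rw [one_div, one_div, ENNReal.ofReal_inv_of_pos hr]
    rw [he, hexp] at h2
    exact h2
  have holder := integral_mul_le_Lp_mul_Lq_of_nonneg (μ := μ) (f := f) (g := g) hpq'
    (Filter.Eventually.of_forall fun ω => (Real.exp_pos _).le)
    (Filter.Eventually.of_forall fun ω => (Real.exp_pos _).le)
    (memf (s := x) hp0) (memf (s := y) hq0)
  have hfp : (fun ω => f ω ^ (1 / p)) = fun ω => Real.exp (x * ξ ω) := by
    funext ω
    rw [hf_def, ← Real.exp_mul]
    congr 1
    field_simp
  have hgq : (fun ω => g ω ^ (1 / q)) = fun ω => Real.exp (y * ξ ω) := by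
    funext ω
    rw [hg_def, ← Real.exp_mul]
    congr 1
    field_simp
  have hfg : (fun ω => f ω * g ω) = fun ω => Real.exp ((p * x + q * y) * ξ ω) := by
    funext ω
    rw [hf_def, hg_def, ← Real.exp_add]
    congr 1
    ring
  simp only [hfp, hgq, hfg, one_div_one_div] at holder
  have hMx := integral_exp_mul_pos μ ξ (hint x)
  have hMy := integral_exp_mul_pos μ ξ (hint y)
  have hM := integral_exp_mul_pos μ ξ (hint (p * x + q * y))
  calc Real.log (∫ ω, Real.exp ((p * x + q * y) * ξ ω) ∂μ)
      ≤ Real.log ((∫ ω, Real.exp (x * ξ ω) ∂μ) ^ p * (∫ ω, Real.exp (y * ξ ω) ∂μ) ^ q) :=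
        Real.log_le_log hM (by simpa using holder)
    _ = p * Real.log (∫ ω, Real.exp (x * ξ ω) ∂μ)
        + q * Real.log (∫ ω, Real.exp (y * ξ ω) ∂μ) := by
        rw [Real.log_mul (Real.rpow_pos_of_pos hMx p).ne' (Real.rpow_pos_of_pos hMy q).ne',
          Real.log_rpow hMx, Real.log_rpow hMy]

lemma logmgf_div_tendsto_atTop (hmeas : Measurable ξ)
    (hint : ∀ b : ℝ, Integrable (fun x => Real.exp (b * ξ x)) μ)
    (hunb : ∀ c : ℝ, 0 < μ {x | c < ξ x}) :
    Tendsto (fun b : ℝ => Real.log (∫ x, Real.exp (b * ξ x) ∂μ) / b) atTop atTop := by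
  have key : ∀ c : ℝ, ∀ b : ℝ, 0 ≤ b →
      b * c + Real.log (μ {x | c < ξ x}).toReal ≤ Real.log (∫ x, Real.exp (b * ξ x) ∂μ) := by
    intro c b hb
    set s : Set Ω := {x | c < ξ x} with hs_def
    have hs : MeasurableSet s := measurableSet_lt measurable_const hmeas
    have hint' : ∫ x, s.indicator (fun _ => Real.exp (b * c)) x ∂μ
        ≤ ∫ x, Real.exp (b * ξ x) ∂μ := by
      refine integral_mono ((integrable_const _).indicator hs) (hint b) fun x => ?_
      by_cases hx : x ∈ s
      · rw [Set.indicator_of_mem hx]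
        exact Real.exp_le_exp.2 (mul_le_mul_of_nonneg_left (le_of_lt hx) hb)
      · rw [Set.indicator_of_notMem hx]
        exact (Real.exp_pos _).le
    rw [integral_indicator_const _ hs, smul_eq_mul] at hint'
    have hm : 0 < (μ s).toReal :=
      ENNReal.toReal_pos (hunb c).ne' (measure_ne_top μ s)
    calc b * c + Real.log (μ s).toReal
        = Real.log ((μ s).toReal * Real.exp (b * c)) := by
          rw [Real.log_mul hm.ne' (Real.exp_pos _).ne', Real.log_exp]; ring
      _ ≤ Real.log (∫ x, Real.exp (b * ξ x) ∂μ) := Real.log_le_log (by positivity) hint'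
  rw [tendsto_atTop]
  intro N
  set c : ℝ := N + 1 with hc
  set m : ℝ := (μ {x | c < ξ x}).toReal with hm_def
  have hm : 0 < m := ENNReal.toReal_pos (hunb c).ne' (measure_ne_top μ _)
  filter_upwards [eventually_ge_atTop (max 1 (-Real.log m))] with b hb
  have hb1 : (1 : ℝ) ≤ b := le_trans (le_max_left _ _) hb
  have hb0 : 0 < b := lt_of_lt_of_le one_pos hb1
  have hblog : -Real.log m ≤ b := le_trans (le_max_right _ _) hb
  have h1 := key c b hb0.le
  have h2 : b * N ≤ b * c + Real.log m := by
    rw [hc]; nlinarith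
  rw [le_div_iff₀ hb0]
  calc N * b = b * N := by ring
    _ ≤ b * c + Real.log m := h2
    _ ≤ _ := h1

end LegendreAux

/-- If `ξ` is a real random variable which is non-constant, essentially unbounded above,
and has finite exponential moments of all orders, with `λ(β) = ln E[exp(β ξ)]`, then
`β λ'(β) - λ(β) → +∞` as `β → +∞`. -/
theorem legendre_term_tendsto_atTop {Ω : Type*} [MeasurableSpace Ω] (μ : Measure Ω)
    [IsProbabilityMeasure μ] (ξ : Ω → ℝ) (hmeas : Measurable ξ)
    (hint : ∀ b : ℝ, Integrable (fun x => Real.exp (b * ξ x)) μ)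
    (hnc : ¬ ∃ c : ℝ, ∀ᵐ x ∂μ, ξ x = c)
    (hunb : ∀ c : ℝ, 0 < μ {x | c < ξ x}) :
    Tendsto
      (fun b : ℝ =>
        b * deriv (fun t : ℝ => Real.log (∫ x, Real.exp (t * ξ x) ∂μ)) b
          - Real.log (∫ x, Real.exp (b * ξ x) ∂μ))
      atTop atTop := by
  set L : ℝ → ℝ := fun t => Real.log (∫ x, Real.exp (t * ξ x) ∂μ) with hL_def
  have hMpos : ∀ t : ℝ, 0 < ∫ x, Real.exp (t * ξ x) ∂μ :=
    fun t => integral_exp_mul_pos μ ξ (hint t)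
  have hD : ∀ β : ℝ, HasDerivAt L
      ((∫ x, ξ x * Real.exp (β * ξ x) ∂μ) / (∫ x, Real.exp (β * ξ x) ∂μ)) β :=
    fun β => (hasDerivAt_integral_exp_mul μ ξ hmeas hint β).log (hMpos β).ne'
  have hconv : ConvexOn ℝ Set.univ L := convexOn_logmgf μ ξ hint
  have hL0 : L 0 = 0 := by
    simp [hL_def]
  have lower : ∀ b : ℝ, 1 < b → L b / b - L 1 ≤ b * deriv L b - L b := by
    intro b hb
    have hb0 : (0 : ℝ) < b := by linarith
    have hDb : deriv L b = (∫ x, ξ x * Real.exp (b * ξ x) ∂μ) / (∫ x, Real.exp (b * ξ x) ∂μ) :=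
      (hD b).deriv
    have s1 : slope L 0 b ≤ deriv L b := by
      rw [hDb]
      exact hconv.slope_le_of_hasDerivAt (Set.mem_univ 0) (Set.mem_univ b) hb0 (hD b)
    have s2 : slope L 1 b ≤ deriv L b := by
      rw [hDb]
      exact hconv.slope_le_of_hasDerivAt (Set.mem_univ 1) (Set.mem_univ b) hb (hD b)
    rw [slope_def_field, hL0, sub_zero, sub_zero] at s1
    rw [slope_def_field] at s2
    have s2' : L b - L 1 ≤ deriv L b * (b - 1) := by
      rw [div_le_iff₀ (by linarith : (0:ℝ) < b - 1)] at s2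
      linarith
    have s1' : L b / b ≤ deriv L b := s1
    nlinarith
  have htend : Tendsto (fun b : ℝ => L b / b - L 1) atTop atTop := by
    simpa [sub_eq_add_neg] using
      (tendsto_atTop_add_const_right atTop (-(L 1))
        (logmgf_div_tendsto_atTop μ ξ hmeas hint hunb))
  refine tendsto_atTop_mono' atTop ?_ htend
  filter_upwards [eventually_gt_atTop (1 : ℝ)] with b hb using lower b hb
end
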